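/- arXiv:2401.15598 — 2 statements merged into one kernel-verified Lean document; each statement's English description precedes it below -/
import Mathlib

section
/- Let f_i : ℝ → ℝ be differentiable, W a symmetric matrix with nonnegative entries, η > 0, α, β > 0, and x a differentiable trajectory of the dynamics ẋ_i = −η ∑_j W_{ij}(sgn^α(f_i'(x_i) − f_j'(x_j)) + sgn^β(f_i'(x_i) − f_j'(x_j))). Then along the trajectory, d/dt ∑_i f_i(x_i(t)) = −(η/2) ∑_{i,j} W_{ij}(|f_i'(x_i) − f_j'(x_j)|^{α+1} + |f_i'(x_i) − f_j'(x_j)|^{β+1}) ≤ 0, so F(x(t)) = ∑_i f_i(x_i(t)) is nonincreasing. -/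
/-! By the chain rule, `d/dt ∑ fᵢ(xᵢ) = -η ∑ᵢ gᵢ ∑ⱼ Wᵢⱼ φ(gᵢ - gⱼ)` with `gᵢ = fᵢ'(xᵢ)` and the odd
function `φ = sgn^α + sgn^β`. Symmetrizing the double sum over `(i, j)` replaces `gᵢ` by
`(gᵢ - gⱼ) / 2`, and `u φ(u) = |u|^(α+1) + |u|^(β+1) ≥ 0`. -/

noncomputable def sgnp (a u : ℝ) : ℝ := u * |u| ^ (a - 1)

open Finset

lemma sgnp_neg (a u : ℝ) : sgnp a (-u) = -sgnp a u := by
  simp [sgnp, abs_neg]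

lemma mul_sgnp {a : ℝ} (ha : a + 1 ≠ 0) (u : ℝ) : u * sgnp a u = |u| ^ (a + 1) := by
  rcases eq_or_ne u 0 with rfl | hu
  · simp [sgnp, Real.zero_rpow ha]
  · have hpos : 0 < |u| := abs_pos.mpr hu
    calc u * sgnp a u = (|u| * |u|) * |u| ^ (a - 1) := by rw [sgnp, abs_mul_abs_self]; ring
      _ = |u| ^ (a + 1) := by
          rw [show a + 1 = 1 + 1 + (a - 1) by ring, Real.rpow_add hpos, Real.rpow_add hpos,
            Real.rpow_one]

lemma sum_mul_sum_mul_odd_of_symm {ι : Type*} [Fintype ι] {W : ι → ι → ℝ}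
    (hW : ∀ i j, W i j = W j i) {φ : ℝ → ℝ} (hφ : ∀ u, φ (-u) = -φ u) (g : ι → ℝ) :
    ∑ i, g i * ∑ j, W i j * φ (g i - g j) =
      (1 / 2) * ∑ i, ∑ j, W i j * ((g i - g j) * φ (g i - g j)) := by
  have hswap : ∑ i, ∑ j, W i j * (g i * φ (g i - g j)) =
      ∑ i, ∑ j, W i j * (-g j * φ (g i - g j)) := by
    -- exchanging `i` and `j` turns `g i` into `-g j`, as `W` is symmetric and `φ` is odd
    rw [sum_comm]
    refine sum_congr rfl fun i _ => sum_congr rfl fun j _ => ?_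
    rw [hW, show g j - g i = -(g i - g j) by ring, hφ]
    ring
  have hsplit : ∑ i, ∑ j, W i j * ((g i - g j) * φ (g i - g j)) =
      ∑ i, ∑ j, W i j * (g i * φ (g i - g j)) + ∑ i, ∑ j, W i j * (-g j * φ (g i - g j)) := by
    rw [← sum_add_distrib]
    exact sum_congr rfl fun i _ => by rw [← sum_add_distrib]; exact sum_congr rfl fun j _ => by ring
  calc ∑ i, g i * ∑ j, W i j * φ (g i - g j)
      = ∑ i, ∑ j, W i j * (g i * φ (g i - g j)) := by
        simp only [mul_sum]
        exact sum_congr rfl fun i _ => sum_congr rfl fun j _ => by ring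
    _ = (1 / 2) * ∑ i, ∑ j, W i j * ((g i - g j) * φ (g i - g j)) := by
        rw [hsplit, ← hswap]; ring

lemma hasDerivAt_sum_comp {ι : Type*} [Fintype ι] {f : ι → ℝ → ℝ}
    (hf : ∀ i, Differentiable ℝ (f i)) {x : ℝ → ι → ℝ} {v : ι → ℝ} {t : ℝ}
    (hx : ∀ i, HasDerivAt (fun s => x s i) (v i) t) :
    HasDerivAt (fun s => ∑ i, f i (x s i)) (∑ i, deriv (f i) (x t i) * v i) t :=
  HasDerivAt.fun_sum fun i _ => ((hf i) (x t i)).hasDerivAt.comp t (hx i)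

theorem lyapunov_decrease (n : ℕ) (W : Fin n → Fin n → ℝ)
    (hW : ∀ i j, W i j = W j i) (hWpos : ∀ i j, 0 ≤ W i j)
    (f : Fin n → ℝ → ℝ) (hf : ∀ i, ContDiff ℝ 1 (f i))
    (α β η : ℝ) (hα : 0 < α) (hβ : 0 < β) (hη : 0 < η)
    (x : ℝ → Fin n → ℝ)
    (hdyn : ∀ t i, HasDerivAt (fun s => x s i)
      (-η * ∑ j, W i j *
        (sgnp α (deriv (f i) (x t i) - deriv (f j) (x t j)) +
         sgnp β (deriv (f i) (x t i) - deriv (f j) (x t j)))) t) :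
    (∀ t, HasDerivAt (fun s => ∑ i, f i (x s i))
      (-(η / 2) * ∑ i, ∑ j, W i j *
        (|deriv (f i) (x t i) - deriv (f j) (x t j)| ^ (α + 1) +
         |deriv (f i) (x t i) - deriv (f j) (x t j)| ^ (β + 1))) t) ∧
    (∀ t, -(η / 2) * ∑ i, ∑ j, W i j *
        (|deriv (f i) (x t i) - deriv (f j) (x t j)| ^ (α + 1) +
         |deriv (f i) (x t i) - deriv (f j) (x t j)| ^ (β + 1)) ≤ 0) ∧
    Antitone (fun t => ∑ i, f i (x t i)) := by
  have hderiv : ∀ t, HasDerivAt (fun s => ∑ i, f i (x s i))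
      (-(η / 2) * ∑ i, ∑ j, W i j *
        (|deriv (f i) (x t i) - deriv (f j) (x t j)| ^ (α + 1) +
         |deriv (f i) (x t i) - deriv (f j) (x t j)| ^ (β + 1))) t := by
    intro t
    convert hasDerivAt_sum_comp (fun i => (hf i).differentiable one_ne_zero) (hdyn t) using 1
    simp_rw [mul_left_comm _ (-η), ← mul_sum]
    rw [sum_mul_sum_mul_odd_of_symm hW (φ := fun u => sgnp α u + sgnp β u)
      (fun u => by rw [sgnp_neg, sgnp_neg, neg_add])]
    simp_rw [mul_add, mul_sgnp (a := α) (by linarith), mul_sgnp (a := β) (by linarith)]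
    ring
  have hnonpos : ∀ t, -(η / 2) * ∑ i, ∑ j, W i j *
      (|deriv (f i) (x t i) - deriv (f j) (x t j)| ^ (α + 1) +
       |deriv (f i) (x t i) - deriv (f j) (x t j)| ^ (β + 1)) ≤ 0 := fun t =>
    mul_nonpos_of_nonpos_of_nonneg (by linarith) <| sum_nonneg fun i _ => sum_nonneg fun j _ =>
      mul_nonneg (hWpos i j) (by positivity)
  refine ⟨hderiv, hnonpos, antitone_of_deriv_nonpos (fun t => (hderiv t).differentiableAt) ?_⟩
  intro t
  rw [(hderiv t).deriv]
  exact hnonpos t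
end

section
/- Let f_i : ℝ → ℝ be differentiable, W symmetric with nonnegative entries whose associated graph (edges where W_{ij} > 0) is connected, and η, α, β > 0. If x̂ ∈ ℝⁿ satisfies ∑_j W_{ij}(sgn^α(f_i'(x̂_i) − f_j'(x̂_j)) + sgn^β(f_i'(x̂_i) − f_j'(x̂_j))) = 0 for all i, then f_i'(x̂_i) = f_j'(x̂_j) for all i, j, i.e., the gradients reach consensus at any equilibrium. -/
lemma sgnp_nonneg (a : ℝ) {u : ℝ} (hu : 0 ≤ u) : 0 ≤ sgnp a u :=
  mul_nonneg hu (Real.rpow_nonneg (abs_nonneg u) _)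

lemma sgnp_pos (a : ℝ) {u : ℝ} (hu : 0 < u) : 0 < sgnp a u :=
  mul_pos hu (Real.rpow_pos_of_pos (abs_pos.mpr hu.ne') _)

lemma SimpleGraph.Reachable.of_forall_adj_imp {V : Type*} {G : SimpleGraph V} {P : V → Prop}
    (hP : ∀ u v, G.Adj u v → P u → P v) {a b : V} (hab : G.Reachable a b) (ha : P a) : P b := by
  obtain ⟨p⟩ := hab
  induction p with
  | nil => exact ha
  | cons hadj _ ih => exact ih (hP _ _ hadj ha)

lemma apply_eq_of_forall_le_of_sum_mul_eq_zero {ι : Type*} [Fintype ι] {w g : ι → ℝ} {φ : ℝ → ℝ}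
    (hw : ∀ k, 0 ≤ w k) (hφ_nonneg : ∀ u, 0 ≤ u → 0 ≤ φ u) (hφ_pos : ∀ u, 0 < u → 0 < φ u)
    {i j : ι} (hmax : ∀ k, g k ≤ g i) (hsum : ∑ k, w k * φ (g i - g k) = 0) (hj : 0 < w j) :
    g j = g i := by
  have hterm_nonneg : ∀ k ∈ Finset.univ, 0 ≤ w k * φ (g i - g k) := fun k _ =>
    mul_nonneg (hw k) (hφ_nonneg _ (sub_nonneg.mpr (hmax k)))
  have hterm_zero : w j * φ (g i - g j) = 0 :=
    (Finset.sum_eq_zero_iff_of_nonneg hterm_nonneg).mp hsum j (Finset.mem_univ j)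
  by_contra hne
  have hlt : g j < g i := lt_of_le_of_ne (hmax j) hne
  exact (mul_pos hj (hφ_pos _ (sub_pos.mpr hlt))).ne' hterm_zero

theorem equilibrium_gradient_consensus_general (n : ℕ) (W : Fin n → Fin n → ℝ)
    (hW : ∀ i j, W i j = W j i) (hWpos : ∀ i j, 0 ≤ W i j)
    (hconn : (SimpleGraph.fromRel (fun i j : Fin n => 0 < W i j)).Connected)
    (f : Fin n → ℝ → ℝ)
    (α β : ℝ)
    (xhat : Fin n → ℝ)
    (heq : ∀ i, ∑ j, W i j *
      (sgnp α (deriv (f i) (xhat i) - deriv (f j) (xhat j)) +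
       sgnp β (deriv (f i) (xhat i) - deriv (f j) (xhat j))) = 0) :
    ∀ i j, deriv (f i) (xhat i) = deriv (f j) (xhat j) := by
  set g : Fin n → ℝ := fun i => deriv (f i) (xhat i)
  have : Nonempty (Fin n) := hconn.nonempty
  obtain ⟨m, hm⟩ := Finite.exists_max g
  have hneighbour : ∀ u v, 0 < W u v → g u = g m → g v = g m := fun u v huv hu =>
    (apply_eq_of_forall_le_of_sum_mul_eq_zero (φ := fun d => sgnp α d + sgnp β d) (hWpos u)
      (fun _ hd => add_nonneg (sgnp_nonneg α hd) (sgnp_nonneg β hd))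
      (fun _ hd => add_pos (sgnp_pos α hd) (sgnp_pos β hd))
      (fun k => hu ▸ hm k) (heq u) huv).trans hu
  have hconst : ∀ i, g i = g m := fun i =>
    (hconn m i).of_forall_adj_imp (P := fun v => g v = g m) (fun u v huv => by
      rw [SimpleGraph.fromRel_adj] at huv
      exact huv.2.elim (hneighbour u v) fun hvu => hneighbour u v (hW u v ▸ hvu)) rfl
  intro i j
  exact (hconst i).trans (hconst j).symm

theorem equilibrium_gradient_consensus (n : ℕ) (W : Fin n → Fin n → ℝ)
    (hW : ∀ i j, W i j = W j i) (hWpos : ∀ i j, 0 ≤ W i j)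
    (hconn : (SimpleGraph.fromRel (fun i j : Fin n => 0 < W i j)).Connected)
    (f : Fin n → ℝ → ℝ) (hf : ∀ i, Differentiable ℝ (f i))
    (η α β : ℝ) (hη : 0 < η) (hα : 0 < α) (hβ : 0 < β)
    (xhat : Fin n → ℝ)
    (heq : ∀ i, ∑ j, W i j *
      (sgnp α (deriv (f i) (xhat i) - deriv (f j) (xhat j)) +
       sgnp β (deriv (f i) (xhat i) - deriv (f j) (xhat j))) = 0) :
    ∀ i j, deriv (f i) (xhat i) = deriv (f j) (xhat j) :=
  equilibrium_gradient_consensus_general n W hW hWpos hconn f α β xhat heq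
end
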